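/- arXiv:2306.06619 — 3 statements merged into one kernel-verified Lean document; each statement's English description precedes it below -/
import Mathlib

section
/- Let C be a category with pullbacks, and let (L, R) be an orthogonal factorization system on C. Then L is stable under pullback if and only if the fibered reflector ρ : Arrow(C) → ΣR (sending each morphism to the R-part of its (L,R)-factorization) preserves cartesian squares, i.e. for every pullback square with right-hand vertical map g and left-hand vertical map f = b*g (pullback of g along the bottom map b), the R-factor satisfies ρ(f) ≅ b*ρ(g) over the common base. -/
/-! Pulling back the `(L, R)`-factorization `X → im g → Z` of `g` along `b` factors `p₂ = b*g` as
`P → b*(im g) → W`, and by pasting both squares are pullbacks. The second factor, a pullback of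
`ρ(g)`, lies in `R`, which is always pullback-stable; if `L` is pullback-stable the first factor lies
in `L`, and uniqueness of factorizations identifies `b*(im g)` with `im p₂`. Conversely, if `g ∈ L`
then `ρ(g)` is an isomorphism, hence so is its pullback `ρ(b*g)`, so `b*g` lies in `L` together
with its `L`-factor. -/

open CategoryTheory

universe v u

variable {C : Type u} [Category.{v} C]

/-- An orthogonal factorization system `(L, R)` on a category `C`. -/
structure IsOFS (L R : MorphismProperty C) : Prop where
  orth : ∀ ⦃A B X Y : C⦄ (f : A ⟶ B) (g : X ⟶ Y), L f → R g →
    ∀ (u : A ⟶ X) (v : B ⟶ Y), u ≫ g = f ≫ v →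
      ∃! l : B ⟶ X, f ≫ l = u ∧ l ≫ g = v
  fac : ∀ ⦃X Y : C⦄ (f : X ⟶ Y), ∃ (Z : C) (l : X ⟶ Z) (r : Z ⟶ Y),
    L l ∧ R r ∧ l ≫ r = f
  retract_left : ∀ ⦃f g : Arrow C⦄ (i : f ⟶ g) (r : g ⟶ f),
    i ≫ r = 𝟙 f → L g.hom → L f.hom
  retract_right : ∀ ⦃f g : Arrow C⦄ (i : f ⟶ g) (r : g ⟶ f),
    i ≫ r = 𝟙 f → R g.hom → R f.hom

/-- A class of morphisms is stable under pullback. -/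
def StableUnderPullback (L : MorphismProperty C) : Prop :=
  ∀ ⦃P X Y Z : C⦄ (fst : P ⟶ X) (snd : P ⟶ Y) (f : X ⟶ Z) (g : Y ⟶ Z),
    IsPullback fst snd f g → L g → L fst

open Limits

namespace IsOFS

variable {L R : MorphismProperty C}

theorem hom_ext (h : IsOFS L R) {A B X Y : C} {f : A ⟶ B} {g : X ⟶ Y} (hf : L f) (hg : R g)
    {k k' : B ⟶ X} (h₁ : f ≫ k = f ≫ k') (h₂ : k ≫ g = k' ≫ g) : k = k' :=
  (h.orth f g hf hg (f ≫ k') (k' ≫ g) (Category.assoc _ _ _)).unique ⟨h₁, h₂⟩ ⟨rfl, rfl⟩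

theorem exists_iso_of_fac (h : IsOFS L R) {X Y M M' : C} {l : X ⟶ M} {r : M ⟶ Y}
    {l' : X ⟶ M'} {r' : M' ⟶ Y} (hl : L l) (hr : R r) (hl' : L l') (hr' : R r')
    (w : l ≫ r = l' ≫ r') : ∃ e : M ≅ M', l ≫ e.hom = l' ∧ e.hom ≫ r' = r := by
  obtain ⟨e, ⟨he₁, he₂⟩, -⟩ := h.orth l r' hl hr' l' r w.symm
  obtain ⟨e', ⟨he'₁, he'₂⟩, -⟩ := h.orth l' r hl' hr l r' w
  refine ⟨⟨e, e', h.hom_ext hl hr ?_ ?_, h.hom_ext hl' hr' ?_ ?_⟩, he₁, he₂⟩ <;>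
    simp [reassoc_of% he₁, reassoc_of% he'₁, he₁, he'₁, he₂, he'₂]

theorem left_comp_isIso (h : IsOFS L R) {X M M' : C} {l : X ⟶ M} (hl : L l) (i : M ⟶ M')
    [IsIso i] : L (l ≫ i) :=
  h.retract_left (f := Arrow.mk (l ≫ i)) (g := Arrow.mk l)
    (Arrow.homMk (𝟙 X) (inv i)) (Arrow.homMk (𝟙 X) i) (by ext <;> simp) hl

theorem right_isIso_comp (h : IsOFS L R) {M' M Y : C} (i : M' ⟶ M) [IsIso i] {r : M ⟶ Y}
    (hr : R r) : R (i ≫ r) :=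
  h.retract_right (f := Arrow.mk (i ≫ r)) (g := Arrow.mk r)
    (Arrow.homMk i (𝟙 Y)) (Arrow.homMk (inv i) (𝟙 Y)) (by ext <;> simp) hr

theorem isIso_of_left_comp (h : IsOFS L R) {X M Y : C} {l : X ⟶ M} {r : M ⟶ Y} (hl : L l)
    (hr : R r) (hlr : L (l ≫ r)) : IsIso r := by
  obtain ⟨s, ⟨hs₁, hs₂⟩, -⟩ := h.orth (l ≫ r) r hlr hr l (𝟙 Y) (by simp)
  exact ⟨s, h.hom_ext hl hr (by simpa using hs₁) (by simp [hs₂]), hs₂⟩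

theorem stableUnderPullback_right (h : IsOFS L R) : StableUnderPullback R := by
  intro P X Y Z fst snd f g hpb hg
  obtain ⟨M, l, r, hl, hr, rfl⟩ := h.fac fst
  obtain ⟨d, ⟨hd₁, hd₂⟩, -⟩ := h.orth l g hl hg snd (r ≫ f) (by simp [← hpb.w])
  let s : M ⟶ P := hpb.lift r d hd₂.symm
  have hls : l ≫ s = 𝟙 P := hpb.hom_ext (by simp [s]) (by simp [s, hd₁])
  have hsl : s ≫ l = 𝟙 M := h.hom_ext hl hr (by simp [reassoc_of% hls]) (by simp [s])
  have : IsIso l := ⟨s, hls, hsl⟩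
  exact h.right_isIso_comp l hr

theorem exists_isPullback_of_fac (h : IsOFS L R) (hL : StableUnderPullback L)
    {P X W Z M N : C} {p₁ : P ⟶ X} {p₂ : P ⟶ W} {g : X ⟶ Z} {b : W ⟶ Z}
    (hpb : IsPullback p₁ p₂ g b) {l : X ⟶ M} {r : M ⟶ Z} (hl : L l) (hr : R r)
    (hg : l ≫ r = g) {l' : P ⟶ N} {r' : N ⟶ W} (hl' : L l') (hr' : R r') (hp₂ : l' ≫ r' = p₂)
    [HasPullback r b] : ∃ t : N ⟶ M, l' ≫ t = p₁ ≫ l ∧ IsPullback t r' r b := by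
  subst hg hp₂
  have hQ := IsPullback.of_hasPullback r b
  let u : P ⟶ pullback r b := hQ.lift (p₁ ≫ l) (l' ≫ r') (by simpa using hpb.w)
  have hu₁ : u ≫ pullback.fst r b = p₁ ≫ l := hQ.lift_fst _ _ _
  have hu₂ : u ≫ pullback.snd r b = l' ≫ r' := hQ.lift_snd _ _ _
  have hu : IsPullback p₁ u l (pullback.fst r b) :=
    IsPullback.of_bot (by rwa [hu₂]) hu₁.symm hQ
  obtain ⟨e, he₁, he₂⟩ := h.exists_iso_of_fac hl' hr' (hL u p₁ _ l hu.flip hl)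
    (h.stableUnderPullback_right _ _ b r hQ.flip hr) hu₂.symm
  refine ⟨e.hom ≫ pullback.fst r b, by rw [reassoc_of% he₁, hu₁], ?_⟩
  exact hQ.of_iso' e (Iso.refl _) (Iso.refl _) (Iso.refl _) (by simp) (by simp [he₂])
    (by simp) (by simp)

end IsOFS

/-- For an orthogonal factorization system `(L, R)` on a category with
pullbacks, given a choice of `(L, R)`-factorizations `f = lpart f ≫ rpart f`, the class
`L` is stable under pullback if and only if the fibered reflector preserves cartesian
squares: for every pullback square with right vertical `g` and left vertical the pullback
of `g` along the bottom map `b`, the `R`-factors fit into a pullback square over `b`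
compatible with the `L`-parts. -/
theorem pullbackStable_iff_reflector_cartesian [Limits.HasPullbacks C]
    (L R : MorphismProperty C) (h : IsOFS L R)
    (im : ∀ ⦃X Y : C⦄, (X ⟶ Y) → C)
    (lpart : ∀ ⦃X Y : C⦄ (f : X ⟶ Y), X ⟶ im f)
    (rpart : ∀ ⦃X Y : C⦄ (f : X ⟶ Y), im f ⟶ Y)
    (hl : ∀ ⦃X Y : C⦄ (f : X ⟶ Y), L (lpart f))
    (hr : ∀ ⦃X Y : C⦄ (f : X ⟶ Y), R (rpart f))
    (hfac : ∀ ⦃X Y : C⦄ (f : X ⟶ Y), lpart f ≫ rpart f = f) :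
    StableUnderPullback L ↔
      ∀ ⦃P X W Z : C⦄ (p₁ : P ⟶ X) (p₂ : P ⟶ W) (g : X ⟶ Z) (b : W ⟶ Z),
        IsPullback p₁ p₂ g b →
          ∃ t : im p₂ ⟶ im g,
            lpart p₂ ≫ t = p₁ ≫ lpart g ∧ IsPullback t (rpart p₂) (rpart g) b := by
  constructor
  · intro hL P X W Z p₁ p₂ g b hpb
    exact h.exists_isPullback_of_fac hL hpb (hl g) (hr g) (hfac g) (hl p₂) (hr p₂) (hfac p₂)
  · intro hρ P X Y Z fst snd f g hpb hg
    obtain ⟨t, -, ht⟩ := hρ snd fst g f hpb.flip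
    have : IsIso (rpart g) := h.isIso_of_left_comp (hl g) (hr g) (by rwa [hfac])
    have : IsIso (rpart fst) := ht.isIso_snd_of_isIso
    simpa [hfac] using h.left_comp_isIso (hl fst) (rpart fst)
end

section
/- Let C be a category with pullbacks and let E ⊆ Arrow(C) be a full replete fibered reflective subcategory of the target fibration, with fibered reflector ρ. Suppose the objects of E are closed under composition. Then for every composable pair f : A → B and g : B → C with the unit η_g : B → B̄ over C, there is an isomorphism ρ(g ∘ f) ≅ ρ(g) ∘ ρ(η_g ∘ f) in the slice C/C (the reflector is compositional). -/
open CategoryTheory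

universe v u

/-- Let `E` be a full replete fibered reflective subcategory of the target
fibration of a category with pullbacks, with fibered reflector sending `f : X ⟶ B` to
`refl f : bar f ⟶ B` with unit `η f : X ⟶ bar f`. If the objects of `E` are closed under
composition, then the reflector is compositional: for composable `f : A ⟶ B`, `g : B ⟶ D`
there is an isomorphism `ρ(g ∘ f) ≅ ρ(g) ∘ ρ(η_g ∘ f)` in the slice over `D`. -/
theorem fibered_reflector_compositional
    {C : Type u} [Category.{v} C] [Limits.HasPullbacks C]
    (E : MorphismProperty C)
    (replete : ∀ ⦃X X' B : C⦄ (e : X ⟶ B) (e' : X' ⟶ B) (φ : X ≅ X'),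
      φ.hom ≫ e' = e → E e → E e')
    (comp_closed : ∀ ⦃A B D : C⦄ (f : A ⟶ B) (g : B ⟶ D), E f → E g → E (f ≫ g))
    (bar : ∀ ⦃X B : C⦄, (X ⟶ B) → C)
    (η : ∀ ⦃X B : C⦄ (f : X ⟶ B), X ⟶ bar f)
    (refl : ∀ ⦃X B : C⦄ (f : X ⟶ B), bar f ⟶ B)
    (hE : ∀ ⦃X B : C⦄ (f : X ⟶ B), E (refl f))
    (hunit : ∀ ⦃X B : C⦄ (f : X ⟶ B), η f ≫ refl f = f)
    (univ : ∀ ⦃X B Y' B' : C⦄ (f : X ⟶ B) (e : Y' ⟶ B'), E e →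
      ∀ (b : B ⟶ B') (u : X ⟶ Y'), u ≫ e = f ≫ b →
        ∃! v : bar f ⟶ Y', η f ≫ v = u ∧ v ≫ e = refl f ≫ b) :
    ∀ ⦃A B D : C⦄ (f : A ⟶ B) (g : B ⟶ D),
      ∃ φ : bar (f ≫ g) ≅ bar (f ≫ η g),
        φ.hom ≫ (refl (f ≫ η g) ≫ refl g) = refl (f ≫ g) := by
  intro A B D f g
  have hEcomp : E (refl (f ≫ η g) ≫ refl g) := comp_closed _ _ (hE _) (hE _)
  obtain ⟨v, ⟨hv1, hv2⟩, hvuniq⟩ :=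
    univ (f ≫ g) (refl (f ≫ η g) ≫ refl g) hEcomp (𝟙 D) (η (f ≫ η g))
      (by rw [← Category.assoc, hunit, Category.assoc, hunit, Category.comp_id])
  obtain ⟨w, ⟨hw1, hw2⟩, hwuniq⟩ :=
    univ (f ≫ η g) (refl (f ≫ g)) (hE _) (refl g) (η (f ≫ g))
      (by rw [hunit, Category.assoc, hunit])
  have hv0 : v ≫ refl (f ≫ η g) ≫ refl g = refl (f ≫ g) := by
    simpa using hv2
  have hvw : v ≫ w = 𝟙 _ := by
    obtain ⟨z, _, hz⟩ :=
      univ (f ≫ g) (refl (f ≫ g)) (hE _) (𝟙 D) (η (f ≫ g))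
        (by rw [hunit, Category.comp_id])
    have h1 : v ≫ w = z := hz _ ⟨by rw [← Category.assoc, hv1, hw1],
      by simp only [Category.assoc, Category.comp_id]; rw [hw2, hv0]⟩
    have h2 : 𝟙 _ = z := hz _ (by simp)
    rw [h1, ← h2]
  have hwv : w ≫ v = 𝟙 _ := by
    obtain ⟨z, _, hz⟩ :=
      univ (f ≫ η g) (refl (f ≫ η g) ≫ refl g) hEcomp (refl g) (η (f ≫ η g))
        (by rw [← Category.assoc, hunit])
    have h1 : w ≫ v = z := hz _ ⟨by rw [← Category.assoc, hw1, hv1],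
      by simp only [Category.assoc]; rw [hv0, hw2]⟩
    have h2 : 𝟙 _ = z := hz _ (by simp)
    rw [h1, ← h2]
  exact ⟨⟨v, w, hvw, hwv⟩, hv0⟩
end

section
/- Let C be a small category, J a Grothendieck topology on C, and for each object X let E(X) denote the frame of J-closed sieves on X (equivalently, the frame of closed subobjects of the representable yX in J-sheaves). Then for every J-covering sieve S on an object X, the canonical map from E(X) to the equalizer of the two maps ∏_{f ∈ S} E(dom f) ⇉ ∏_{f ∈ S, g : • → dom f} E(dom g) (given by restriction along the two legs) is an order isomorphism; i.e. the presheaf of frames E is a J-sheaf (stack of frames). -/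
open CategoryTheory

universe u

/-- For a site `(C, J)`, the presheaf `E` of frames of `J`-closed sieves is
a `J`-stack: for every `J`-covering sieve `S` on `X`, the canonical restriction map from
`E(X)` to the equalizer of the two restriction maps (i.e. to compatible families of closed
sieves indexed by `S`) is an order isomorphism. -/
theorem closed_sieves_form_stack {C : Type u} [SmallCategory C]
    (J : GrothendieckTopology C) (X : C) (S : Sieve X) (hS : S ∈ J X) :
    (∀ (c : ∀ ⦃Y : C⦄ (f : Y ⟶ X), S f → Sieve Y),
      (∀ ⦃Y : C⦄ (f : Y ⟶ X) (hf : S f), J.IsClosed (c f hf)) →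
      (∀ ⦃Y Z : C⦄ (f : Y ⟶ X) (hf : S f) (g : Z ⟶ Y),
        Sieve.pullback g (c f hf) = c (g ≫ f) (S.downward_closed hf g)) →
      ∃! T : Sieve X, J.IsClosed T ∧
        ∀ ⦃Y : C⦄ (f : Y ⟶ X) (hf : S f), Sieve.pullback f T = c f hf) ∧
    (∀ T T' : Sieve X, J.IsClosed T → J.IsClosed T' →
      (∀ ⦃Y : C⦄ (f : Y ⟶ X), S f → Sieve.pullback f T ≤ Sieve.pullback f T') →
      T ≤ T') := by
  have part2 : ∀ T T' : Sieve X, J.IsClosed T → J.IsClosed T' →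
      (∀ ⦃Y : C⦄ (f : Y ⟶ X), S f → Sieve.pullback f T ≤ Sieve.pullback f T') →
      T ≤ T' := by
    intro T T' hT hT' hle Y g hg
    apply hT'
    apply J.superset_covering _ (J.pullback_stable g hS)
    intro Z h hh
    have h1 : T (h ≫ g) := T.downward_closed hg h
    have h2 : Sieve.pullback (h ≫ g) T (𝟙 Z) := by
      simp [Sieve.pullback_apply, h1]
    have := hle (h ≫ g) hh (𝟙 Z) h2
    simpa using this
  refine ⟨?_, part2⟩
  intro c hclosed hcomp
  -- proof-irrelevance / rewriting helper for `c`
  have key : ∀ ⦃Z : C⦄ (a b : Z ⟶ X) (hab : a = b) (ha : S a),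
      c a ha = c b (hab ▸ ha) := by
    rintro Z a b rfl ha; rfl
  -- the glued sieve
  set T : Sieve X :=
    { arrows := fun Y g => ∀ ⦃Z : C⦄ (h : Z ⟶ Y) (hh : S (h ≫ g)), c (h ≫ g) hh ∈ J Z
      downward_closed := by
        intro Y W g hg k Z h hh
        have hh' : S ((h ≫ k) ≫ g) := by simpa using hh
        have := hg (h ≫ k) hh'
        have e : c ((h ≫ k) ≫ g) hh' = c (h ≫ k ≫ g) hh :=
          key _ _ (by simp) _
        rwa [e] at this } with hTdef
  have hTclosed : J.IsClosed T := by
    intro Y g hg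
    intro Z h hh
    -- use transitivity along the covering sieve `pullback (h ≫ g) T`
    have hcov : Sieve.pullback (h ≫ g) T ∈ J Z := by
      rw [Sieve.pullback_comp]
      exact J.pullback_stable h hg
    apply J.transitive hcov
    intro W k hk
    -- hk : T (k ≫ h ≫ g)
    have hS' : S (𝟙 W ≫ k ≫ h ≫ g) := by
      simpa using S.downward_closed hh k
    have h1 := hk (𝟙 W) hS'
    have e1 : c (𝟙 W ≫ k ≫ h ≫ g) hS' = c (k ≫ h ≫ g) (by simpa using hS') :=
      key _ _ (by simp) _
    have e2 : Sieve.pullback k (c (h ≫ g) hh) = c (k ≫ h ≫ g) (by simpa using hS') := by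
      have := hcomp (h ≫ g) hh k
      rw [this]
    rw [e1] at h1
    rwa [e2]
  have hTpull : ∀ ⦃Y : C⦄ (f : Y ⟶ X) (hf : S f), Sieve.pullback f T = c f hf := by
    intro Y f hf
    ext Z k
    constructor
    · intro hk
      -- hk : T (k ≫ f)
      have hS' : S (𝟙 Z ≫ k ≫ f) := by simpa using S.downward_closed hf k
      have h1 := hk (𝟙 Z) hS'
      have e1 : c (𝟙 Z ≫ k ≫ f) hS' = c (k ≫ f) (S.downward_closed hf k) :=
        key _ _ (by simp) _
      rw [e1, ← hcomp f hf k] at h1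
      exact hclosed f hf k h1
    · intro hk
      intro W h hh
      have e2 : c (h ≫ k ≫ f) hh = Sieve.pullback (h ≫ k) (c f hf) := by
        rw [hcomp f hf (h ≫ k)]
        exact (key _ _ (by simp) _).symm
      rw [e2]
      have : Sieve.pullback (h ≫ k) (c f hf) = ⊤ := by
        rw [← Sieve.id_mem_iff_eq_top]
        simpa using (c f hf).downward_closed hk h
      rw [this]
      exact J.top_mem W
  refine ⟨T, ⟨hTclosed, hTpull⟩, ?_⟩
  rintro T' ⟨hT'closed, hT'pull⟩
  apply le_antisymm
  · exact part2 T' T hT'closed hTclosed fun Y f hf => by rw [hT'pull f hf, hTpull f hf]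
  · exact part2 T T' hTclosed hT'closed fun Y f hf => by rw [hT'pull f hf, hTpull f hf]
end
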